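/- Let q be a prime power and n a positive integer with gcd(n,q) = 1. Let C be a cyclic code of length n over F_{q^2}, i.e., an ideal of F_{q^2}[x]/⟨x^n − 1⟩, with generator polynomial g(x) (the unique monic divisor of x^n − 1 whose image generates C). Then C is Hermitian complementary dual, i.e., C ∩ C^{⊥_H} = {0}, if and only if g(x) = g†(x). -/

import Mathlib

/-!
With `σ` the Frobenius `x ↦ x ^ q`, the map `f ↦ f†` is multiplicative and fixes `X ^ n - 1`,
so `g * h = X ^ n - 1` gives `g† * h† = X ^ n - 1`. Pairing `u` against the shifts `g * X ^ k`
reads off the coefficients of `u * g†` in degrees `deg g, …, n - 1`, and these vanish exactly when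
`h† ∣ u`; hence `C^⊥H = ⟨h†⟩` and `C ∩ C^⊥H` consists of the common multiples of `g` and `h†` of
degree `< n`. If `g = g†`, then `g` and `h†` are coprime because `X ^ n - 1` is squarefree
(`gcd(n, q) = 1`), so the only such multiple is `0`. Conversely, if `0` is the only one, the
lcm of `g` and `h†` has degree `≥ n = deg g + deg h†`, so they are coprime, and `g ∣ g† * h†`
gives `g ∣ g†`; both are monic of the same degree.
-/

open Polynomial

/-- The reciprocal polynomial `f*(x) = x^(deg f) * f(0)⁻¹ * f(1/x)`. -/
noncomputable def crecip {F : Type*} [Field F] (f : F[X]) : F[X] :=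
  C (f.coeff 0)⁻¹ * f.reverse

/-- The conjugate-reciprocal polynomial `f†`, obtained by applying the
conjugation `a ↦ a ^ q` to each coefficient of `f*`. -/
noncomputable def cdagger {F : Type*} [Field F] (q : ℕ) (f : F[X]) : F[X] :=
  (crecip f).sum fun i a => C (a ^ q) * X ^ i

/-- A polynomial is SCRIM if it is monic, irreducible, and self-conjugate-reciprocal. -/
def IsSCRIM {F : Type*} [Field F] (q : ℕ) (f : F[X]) : Prop :=
  f.Monic ∧ Irreducible f ∧ f = cdagger q f

/-- The set `Ω_{q²,n}` of SCRIM factors of `x^n - 1` over `F = F_{q²}`. -/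
def scrimFactors (F : Type*) [Field F] (q n : ℕ) : Set F[X] :=
  {f | IsSCRIM q f ∧ f ∣ X ^ n - 1}

/-- The codewords of a cyclic code, viewed as the polynomials of degree `< n`
in the ideal `C` of `F[x]` corresponding to the ideal `C` of `F[x]/⟨x^n - 1⟩`. -/
def codewords {F : Type*} [Field F] (C : Ideal F[X]) (n : ℕ) : Set F[X] :=
  {f | f ∈ C ∧ f.degree < (n : WithBot ℕ)}

/-- The Hermitian dual code `C^⊥H`, as a set of polynomials of degree `< n`. -/
def hermDual {F : Type*} [Field F] (q : ℕ) (C : Ideal F[X]) (n : ℕ) : Set F[X] :=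
  {u | u.degree < (n : WithBot ℕ) ∧ ∀ v ∈ C, v.degree < (n : WithBot ℕ) →
      ∑ i ∈ Finset.range n, u.coeff i * (v.coeff i) ^ q = 0}

section Reciprocal

variable {F : Type*} [Field F]

theorem monic_crecip {f : F[X]} (hf : f.coeff 0 ≠ 0) : (crecip f).Monic := by
  rw [Monic, crecip, leadingCoeff_mul, leadingCoeff_C, reverse_leadingCoeff, trailingCoeff,
    natTrailingDegree_eq_zero.2 (Or.inr hf), inv_mul_cancel₀ hf]

theorem natDegree_crecip {f : F[X]} (hf : f.coeff 0 ≠ 0) :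
    (crecip f).natDegree = f.natDegree := by
  rw [crecip, natDegree_C_mul (inv_ne_zero hf), reverse_natDegree,
    natTrailingDegree_eq_zero.2 (Or.inr hf), Nat.sub_zero]

theorem crecip_mul (f h : F[X]) : crecip (f * h) = crecip f * crecip h := by
  rw [crecip, crecip, crecip, reverse_mul_of_domain, mul_coeff_zero, mul_inv, C_mul]
  ring

theorem crecip_X_pow_sub_one {n : ℕ} (hn : n ≠ 0) :
    crecip ((X : F[X]) ^ n - 1) = X ^ n - 1 := by
  have hdeg : ((X : F[X]) ^ n - 1).natDegree = n := by rw [← C_1, natDegree_X_pow_sub_C]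
  rw [crecip, reverse, hdeg, reflect_sub, reflect_monomial, ← pow_zero (X : F[X]),
    reflect_monomial, revAt_le le_rfl, revAt_le (Nat.zero_le n)]
  simp [coeff_X_pow, hn.symm]

variable {q : ℕ} (σ : F →+* F) (hσ : ∀ x, σ x = x ^ q)
include hσ

theorem cdagger_eq_map_crecip (f : F[X]) : cdagger q f = (crecip f).map σ := by
  rw [cdagger, Polynomial.map, eval₂_eq_sum]
  simp only [hσ, RingHom.coe_comp, Function.comp_apply]

theorem cdagger_mul (f h : F[X]) : cdagger q (f * h) = cdagger q f * cdagger q h := by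
  rw [cdagger_eq_map_crecip σ hσ, cdagger_eq_map_crecip σ hσ, cdagger_eq_map_crecip σ hσ,
    crecip_mul, Polynomial.map_mul]

theorem cdagger_X_pow_sub_one {n : ℕ} (hn : n ≠ 0) :
    cdagger q ((X : F[X]) ^ n - 1) = X ^ n - 1 := by
  rw [cdagger_eq_map_crecip σ hσ, crecip_X_pow_sub_one hn, Polynomial.map_sub, Polynomial.map_pow,
    map_X, Polynomial.map_one]

theorem cdagger_mul_cdagger_of_mul_eq {g h : F[X]} {n : ℕ} (hn : n ≠ 0)
    (hgh : g * h = X ^ n - 1) : cdagger q g * cdagger q h = X ^ n - 1 := by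
  rw [← cdagger_mul σ hσ, hgh, cdagger_X_pow_sub_one σ hσ hn]

theorem monic_cdagger {f : F[X]} (hf : f.coeff 0 ≠ 0) : (cdagger q f).Monic := by
  rw [cdagger_eq_map_crecip σ hσ]
  exact (monic_crecip hf).map σ

theorem natDegree_cdagger {f : F[X]} (hf : f.coeff 0 ≠ 0) :
    (cdagger q f).natDegree = f.natDegree := by
  rw [cdagger_eq_map_crecip σ hσ, natDegree_map, natDegree_crecip hf]

theorem cdagger_eq_C_mul_reverse_map (f : F[X]) :
    cdagger q f = C (σ (f.coeff 0))⁻¹ * (f.map σ).reverse := by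
  rw [cdagger_eq_map_crecip σ hσ, crecip, Polynomial.map_mul, map_C, map_inv₀, reverse, reverse,
    natDegree_map, reflect_map]

end Reciprocal

theorem sum_coeff_mul_coeff_mul_X_pow {R : Type*} [Semiring R] (u G : R[X]) {n k : ℕ}
    (hk : G.natDegree + k < n) :
    ∑ i ∈ Finset.range n, u.coeff i * (G * X ^ k).coeff i
      = (u * G.reverse).coeff (G.natDegree + k) := by
  rw [coeff_mul, Finset.Nat.sum_antidiagonal_eq_sum_range_succ_mk,
    ← Finset.sum_subset (Finset.range_subset_range.2 hk) fun i _ hi => ?_]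
  · refine Finset.sum_congr rfl fun i hi => ?_
    rw [Finset.mem_range] at hi
    rw [coeff_reverse, coeff_mul_X_pow']
    split_ifs with hki
    · rw [revAt_le (by omega), show G.natDegree - (G.natDegree + k - i) = i - k by omega]
    · rw [revAt_eq_self_of_lt (by omega), coeff_eq_zero_of_natDegree_lt (p := G) (by omega),
        mul_zero]
  · rw [Finset.mem_range, not_lt] at hi
    rw [coeff_mul_X_pow', if_pos (by omega), coeff_eq_zero_of_natDegree_lt (p := G) (by omega),
      mul_zero]

theorem sum_coeff_mul_coeff_mul_eq_sum_X_pow {R : Type*} [CommSemiring R] (s : Finset ℕ)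
    (u G A : R[X]) {m : ℕ} (hA : A.natDegree < m) :
    ∑ i ∈ s, u.coeff i * (G * A).coeff i
      = ∑ k ∈ Finset.range m, A.coeff k * ∑ i ∈ s, u.coeff i * (G * X ^ k).coeff i := by
  conv_lhs => rw [A.as_sum_range' m hA]
  simp only [Finset.mul_sum, finsetSum_coeff, ← C_mul_X_pow_eq_monomial, mul_left_comm G,
    coeff_C_mul]
  rw [Finset.sum_comm]
  exact Finset.sum_congr rfl fun k _ => Finset.sum_congr rfl fun i _ => by ring

theorem exists_eq_add_X_pow_mul {R : Type*} [Semiring R] {w : R[X]} {m k : ℕ}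
    (hw : w.degree < (m + k : ℕ)) :
    ∃ A B : R[X], A.degree < m ∧ B.degree < k ∧ w = A + X ^ m * B := by
  set AB := degreeLT.addLinearEquiv R m k ⟨w, mem_degreeLT.2 hw⟩
  refine ⟨AB.1, AB.2, mem_degreeLT.1 AB.1.2, mem_degreeLT.1 AB.2.2, ?_⟩
  rw [← degreeLT.addLinearEquiv_symm_apply', LinearEquiv.symm_apply_apply]

theorem dvd_iff_coeff_mul_eq_zero {R : Type*} [CommRing R] [IsDomain R] {P Q u : R[X]} {n : ℕ}
    (hn : n ≠ 0) (hPQ : P * Q = X ^ n - 1) (hu : u.degree < n) :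
    Q ∣ u ↔ ∀ k, P.natDegree + k < n → (u * P).coeff (P.natDegree + k) = 0 := by
  have hXn : (X ^ n - 1 : R[X]) ≠ 0 := by
    rw [← C_1]
    exact X_pow_sub_C_ne_zero (Nat.pos_of_ne_zero hn) 1
  have hP : P ≠ 0 := left_ne_zero_of_mul (hPQ ▸ hXn)
  have hQ : Q ≠ 0 := right_ne_zero_of_mul (hPQ ▸ hXn)
  have hdeg : P.natDegree + Q.natDegree = n := by
    rw [← natDegree_mul hP hQ, hPQ, ← C_1, natDegree_X_pow_sub_C]
  constructor
  · rintro ⟨t, rfl⟩ k hk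
    rcases eq_or_ne t 0 with rfl | ht
    · simp
    rw [← natDegree_lt_iff_degree_lt (mul_ne_zero hQ ht), natDegree_mul hQ ht] at hu
    rw [show Q * t * P = t * X ^ n - t by linear_combination t * hPQ, coeff_sub,
      coeff_mul_X_pow', if_neg (by omega), coeff_eq_zero_of_natDegree_lt (by omega), sub_zero]
  · intro H
    have huP : (u * P).degree < (n + P.natDegree : ℕ) := by
      rw [degree_mul, degree_eq_natDegree hP, Nat.cast_add]
      exact WithBot.add_lt_add_right (WithBot.natCast_ne_bot _) hu
    obtain ⟨A, B, hA, hB, hw⟩ := exists_eq_add_X_pow_mul huP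
    -- `u P = A + X ^ n B ≡ A + B` modulo `X ^ n - 1 = P Q`; the vanishing coefficients of
    -- `u P` force `deg A < deg P`, so `P ∣ A + B` has too small a degree to be nonzero.
    have hA' : A.degree < P.natDegree := by
      refine (degree_lt_iff_coeff_zero _ _).2 fun i hi => ?_
      by_cases hin : i < n
      · have := H (i - P.natDegree) (by omega)
        rwa [Nat.add_sub_cancel' hi, hw, coeff_add, coeff_X_pow_mul', if_neg (by omega),
          add_zero] at this
      · exact coeff_eq_zero_of_degree_lt (hA.trans_le (by exact_mod_cast not_lt.1 hin))
    have hAB : A + B = 0 := by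
      refine eq_zero_of_dvd_of_degree_lt (p := P)
        ⟨u - Q * B, by linear_combination -hw + B * hPQ⟩ ?_
      rw [degree_eq_natDegree hP]
      exact (degree_add_le A B).trans_lt (max_lt hA' hB)
    exact ⟨B, mul_right_cancel₀ hP (by linear_combination hw + hAB - B * hPQ)⟩

theorem coeff_zero_mul_coeff_zero_ne_zero {R : Type*} [CommRing R] [Nontrivial R] {g h : R[X]}
    {n : ℕ} (hn : n ≠ 0) (hgh : g * h = X ^ n - 1) : g.coeff 0 * h.coeff 0 ≠ 0 := by
  rw [← mul_coeff_zero, hgh]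
  simp [hn.symm]

section HermitianDual

variable {F : Type*} [Field F] {q n : ℕ} (σ : F →+* F) (hσ : ∀ x, σ x = x ^ q)
include hσ

theorem forall_dvd_sum_coeff_mul_coeff_pow_eq_zero_iff {g : F[X]} (hg : g ≠ 0) (u : F[X]) :
    (∀ v, g ∣ v → v.degree < n →
        ∑ i ∈ Finset.range n, u.coeff i * v.coeff i ^ q = 0) ↔
      ∀ k, g.natDegree + k < n → (u * (g.map σ).reverse).coeff (g.natDegree + k) = 0 := by
  simp only [← hσ, ← coeff_map]
  constructor
  · intro H k hk
    have hdeg : (g * X ^ k).degree < (n : WithBot ℕ) := by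
      rw [degree_mul_X_pow, degree_eq_natDegree hg]
      exact_mod_cast hk
    rw [← natDegree_map σ, ← sum_coeff_mul_coeff_mul_X_pow u _ (by rwa [natDegree_map])]
    simpa using H _ (dvd_mul_right g (X ^ k)) hdeg
  · rintro H _ ⟨a, rfl⟩ hdeg
    rcases eq_or_ne a 0 with rfl | ha
    · simp
    rw [← natDegree_lt_iff_degree_lt (mul_ne_zero hg ha), natDegree_mul hg ha] at hdeg
    rw [Polynomial.map_mul, sum_coeff_mul_coeff_mul_eq_sum_X_pow _ _ _ _ (m := a.natDegree + 1)
      (by rw [natDegree_map]; omega)]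
    refine Finset.sum_eq_zero fun k hk => ?_
    rw [Finset.mem_range] at hk
    rw [sum_coeff_mul_coeff_mul_X_pow u _ (by rw [natDegree_map]; omega), natDegree_map,
      H k (by omega), mul_zero]

theorem mem_hermDual_span_iff {g h : F[X]} (hn : n ≠ 0) (hgh : g * h = X ^ n - 1) (u : F[X]) :
    u ∈ hermDual q (Ideal.span {g}) n ↔ u.degree < n ∧ cdagger q h ∣ u := by
  have hg0 := left_ne_zero_of_mul (coeff_zero_mul_coeff_zero_ne_zero hn hgh)
  have hg : g ≠ 0 := fun hg => hg0 (by rw [hg, coeff_zero])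
  simp only [hermDual, Set.mem_ofPred_eq, Ideal.mem_span_singleton]
  refine and_congr_right fun hu => ?_
  rw [forall_dvd_sum_coeff_mul_coeff_pow_eq_zero_iff σ hσ hg u,
    dvd_iff_coeff_mul_eq_zero hn (cdagger_mul_cdagger_of_mul_eq σ hσ hn hgh) hu,
    natDegree_cdagger σ hσ hg0]
  refine forall₂_congr fun k _ => ?_
  rw [cdagger_eq_C_mul_reverse_map σ hσ, mul_left_comm, coeff_C_mul, mul_eq_zero,
    or_iff_right (inv_ne_zero ((map_ne_zero σ).2 hg0))]

theorem codewords_inter_hermDual_eq_singleton_zero_iff {g h : F[X]} (hn : n ≠ 0)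
    (hgh : g * h = X ^ n - 1) :
    codewords (Ideal.span {g}) n ∩ hermDual q (Ideal.span {g}) n = {0} ↔
      ∀ u, g ∣ u → cdagger q h ∣ u → u.degree < n → u = 0 := by
  simp only [Set.eq_singleton_iff_unique_mem, Set.mem_inter_iff, codewords, Set.mem_ofPred_eq,
    mem_hermDual_span_iff σ hσ hn hgh, Ideal.mem_span_singleton]
  simp only [dvd_zero, degree_zero, bot_lt_iff_ne_bot, ne_eq, WithBot.natCast_ne_bot,
    not_false_eq_true, and_self, true_and]
  exact forall_congr' fun u => by tauto

end HermitianDual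

section Coprime

variable {F : Type*} [Field F]

theorem isCoprime_of_forall_dvd_dvd_degree_lt {a b : F[X]} (ha : a ≠ 0) (hb : b ≠ 0)
    (H : ∀ u, a ∣ u → b ∣ u → u.degree < (a * b).degree → u = 0) : IsCoprime a b := by
  classical
  rw [← EuclideanDomain.gcd_isUnit_iff]
  by_contra hD
  have hgcd : EuclideanDomain.gcd a b ≠ 0 := fun h => ha (EuclideanDomain.gcd_eq_zero_iff.1 h).1
  have hlcm : EuclideanDomain.lcm a b ≠ 0 := fun h =>
    (EuclideanDomain.lcm_eq_zero_iff.1 h).elim ha hb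
  refine hlcm (H _ (EuclideanDomain.dvd_lcm_left a b) (EuclideanDomain.dvd_lcm_right a b) ?_)
  have hpos := degree_pos_of_ne_zero_of_nonunit hgcd hD
  rw [degree_eq_natDegree hgcd, Nat.cast_pos] at hpos
  rw [← EuclideanDomain.gcd_mul_lcm, degree_mul, degree_eq_natDegree hgcd,
    degree_eq_natDegree hlcm]
  exact_mod_cast Nat.lt_add_of_pos_left hpos

theorem forall_dvd_dvd_degree_lt_eq_zero_iff {f g g' h' : F[X]} (hg : g.Monic) (hg' : g'.Monic)
    (hdeg : g'.natDegree = g.natDegree) (hgf : g ∣ f) (hf : g' * h' = f) (hsq : Squarefree f) :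
    (∀ u, g ∣ u → h' ∣ u → u.degree < f.degree → u = 0) ↔ g = g' := by
  have hh' : h' ≠ 0 := right_ne_zero_of_mul (hf ▸ hsq.ne_zero)
  have hdegf : (g * h').degree = f.degree := by
    rw [← hf, degree_mul, degree_mul, degree_eq_natDegree hg.ne_zero,
      degree_eq_natDegree hg'.ne_zero, hdeg]
  constructor
  · intro H
    have hcop : IsCoprime g h' := isCoprime_of_forall_dvd_dvd_degree_lt hg.ne_zero hh' (hdegf ▸ H)
    exact (eq_of_monic_of_dvd_of_natDegree_le hg hg' (hcop.dvd_of_dvd_mul_right (hf ▸ hgf))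
      hdeg.le).symm
  · rintro rfl u hgu hhu hu
    have hcop : IsCoprime g h' := (IsRelPrime.of_squarefree_mul (hf ▸ hsq)).isCoprime
    exact eq_zero_of_dvd_of_degree_lt (hcop.mul_dvd hgu hhu) (hf ▸ hu)

end Coprime

theorem exists_ringHom_eq_pow {F : Type*} [Field F] [Fintype F] {q : ℕ}
    (hq : q ∣ Fintype.card F) : ∃ σ : F →+* F, ∀ x, σ x = x ^ q := by
  obtain ⟨p, hchar⟩ := CharP.exists F
  have hp := CharP.char_is_prime F p
  have : Fact p.Prime := ⟨hp⟩
  obtain ⟨m, -, hm⟩ := FiniteField.card F p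
  obtain ⟨k, -, rfl⟩ := (Nat.dvd_prime_pow hp).1 (hm ▸ hq)
  exact ⟨iterateFrobenius F p k, iterateFrobenius_def p k⟩

theorem natCast_ne_zero_of_coprime {R : Type*} [CommRing R] [Nontrivial R] {n q : ℕ}
    (hq : (q : R) = 0) (hnq : n.Coprime q) : (n : R) ≠ 0 := by
  have := (Nat.isCoprime_iff_coprime.2 hnq).map (Int.castRingHom R)
  simp only [eq_intCast, Int.cast_natCast, hq, isCoprime_zero_right] at this
  exact this.ne_zero

theorem stmt16_general {q n : ℕ}
    {F : Type*} [Field F] [Fintype F] (hF : Fintype.card F = q ^ 2)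
    (hgcd : Nat.Coprime n q) (C : Ideal F[X]) (g : F[X])
    (hg : g.Monic) (hgd : g ∣ X ^ n - 1) (hC : C = Ideal.span {g}) :
    codewords C n ∩ hermDual q C n = {0} ↔ g = cdagger q g := by
  obtain ⟨σ, hσ⟩ := exists_ringHom_eq_pow (F := F) (q := q) ⟨q, by rw [hF, sq]⟩
  have hq : (q : F) = 0 := by
    have := FiniteField.cast_card_eq_zero F
    rwa [hF, Nat.cast_pow, pow_eq_zero_iff two_ne_zero] at this
  have hnF : (n : F) ≠ 0 := natCast_ne_zero_of_coprime hq hgcd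
  have hn : n ≠ 0 := by
    rintro rfl
    exact hnF Nat.cast_zero
  obtain ⟨h, hgh⟩ := hgd
  rw [eq_comm] at hgh
  have hg0 := left_ne_zero_of_mul (coeff_zero_mul_coeff_zero_ne_zero hn hgh)
  have hdeg : ((X : F[X]) ^ n - 1).degree = n := by
    rw [← C_1, degree_X_pow_sub_C (Nat.pos_of_ne_zero hn)]
  subst hC
  rw [codewords_inter_hermDual_eq_singleton_zero_iff σ hσ hn hgh, ← hdeg]
  exact forall_dvd_dvd_degree_lt_eq_zero_iff hg (monic_cdagger σ hσ hg0)
    (natDegree_cdagger σ hσ hg0) ⟨h, hgh.symm⟩ (cdagger_mul_cdagger_of_mul_eq σ hσ hn hgh)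
    (X_pow_sub_one_separable_iff.2 hnF).squarefree

theorem stmt16 {q n : ℕ} (hq : IsPrimePow q)
    {F : Type*} [Field F] [Fintype F] (hF : Fintype.card F = q ^ 2)
    (hn : 0 < n) (hgcd : Nat.Coprime n q) (C : Ideal F[X]) (g : F[X])
    (hg : g.Monic) (hgd : g ∣ X ^ n - 1) (hC : C = Ideal.span {g}) :
    codewords C n ∩ hermDual q C n = {0} ↔ g = cdagger q g :=
  stmt16_general hF hgcd C g hg hgd hC
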